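/- Let X be a quandle and R a congruence on X. Then R permutes with the orbit congruence ∼: for all x, z ∈ X, (∃ y, R x y ∧ y ∼ z) if and only if (∃ y, x ∼ y ∧ R y z); that is, ∼ ∘ R = R ∘ ∼ as relations. -/

import Mathlib

open Quandles

/-- The paper's (right-action) quandle operation `x ◃ y`, i.e. Mathlib's `y ◃ x`.
With this convention `x ▷ x = x`, `(x ▷ y) ▷⁻¹ y = x = (x ▷⁻¹ y) ▷ y`, and
both `▷` and `▷⁻¹` are right self-distributive. -/
def rAct {Q : Type*} [Quandle Q] (x y : Q) : Q := y ◃ x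

/-- The paper's (right-action) inverse quandle operation `x ◃⁻¹ y`, i.e. Mathlib's `y ◃⁻¹ x`. -/
def rInvAct {Q : Type*} [Quandle Q] (x y : Q) : Q := y ◃⁻¹ x

local infixl:65 " ▷ " => rAct
local infixl:65 " ▷⁻¹ " => rInvAct

/-- The orbit relation `∼` on a quandle: the equivalence relation generated by the
relation `{(a, b) | ∃ z, a ▷ z = b}`; `x ∼ y` iff `x` and `y` lie in the same
connected component (orbit under the inner automorphism group). -/
def orbitRel (Q : Type*) [Quandle Q] : Q → Q → Prop :=
  Relation.EqvGen (fun a b => ∃ z : Q, a ▷ z = b)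

/-- A congruence on a quandle: an equivalence relation compatible with both operations. -/
def IsCongruence {Q : Type*} [Quandle Q] (R : Q → Q → Prop) : Prop :=
  Equivalence R ∧
    ∀ a b c d : Q, R a b → R c d → R (a ▷ c) (b ▷ d) ∧ R (a ▷⁻¹ c) (b ▷⁻¹ d)

/-! A congruence is compatible with every inner automorphism `· ▷ w` and its inverse, so a
chain of such moves leading from `y` to `z` can be replayed from any `x` that is `R`-related to
`y`, ending at a point `R`-related to `z`. As both relations are symmetric, this one inclusion
also yields the reverse one. -/

section

variable {Q : Type*} [Quandle Q]

lemma rInvAct_rAct (a w : Q) : a ▷ w ▷⁻¹ w = a :=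
  Rack.left_inv w a

lemma orbitRel_rAct (x w : Q) : orbitRel Q x (x ▷ w) :=
  Relation.EqvGen.rel _ _ ⟨w, rfl⟩

lemma orbitRel_rInvAct (x w : Q) : orbitRel Q x (x ▷⁻¹ w) :=
  Relation.EqvGen.symm _ _ (Relation.EqvGen.rel _ _ ⟨w, Rack.right_inv w x⟩)

namespace IsCongruence

variable {R : Q → Q → Prop}

lemma rAct_right (hR : IsCongruence R) {a b : Q} (h : R a b) (w : Q) : R (a ▷ w) (b ▷ w) :=
  (hR.2 a b w w h (hR.1.refl w)).1

lemma rInvAct_right (hR : IsCongruence R) {a b : Q} (h : R a b) (w : Q) :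
    R (a ▷⁻¹ w) (b ▷⁻¹ w) :=
  (hR.2 a b w w h (hR.1.refl w)).2

lemma exists_orbitRel_of_symmGen (hR : IsCongruence R) {x a b : Q} (hxa : R x a)
    (hab : Relation.SymmGen (fun a b => ∃ w : Q, a ▷ w = b) a b) :
    ∃ x', orbitRel Q x x' ∧ R x' b := by
  rcases hab with ⟨w, rfl⟩ | ⟨w, rfl⟩
  · exact ⟨x ▷ w, orbitRel_rAct x w, hR.rAct_right hxa w⟩
  · refine ⟨x ▷⁻¹ w, orbitRel_rInvAct x w, ?_⟩
    simpa only [rInvAct_rAct] using hR.rInvAct_right hxa w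

lemma exists_orbitRel_of_rel_orbitRel (hR : IsCongruence R) {x y z : Q} (hxy : R x y)
    (hyz : orbitRel Q y z) :
    ∃ y', orbitRel Q x y' ∧ R y' z := by
  rw [orbitRel, ← Relation.EqvGen.reflTransGen_symmGen] at hyz
  induction hyz with
  | refl => exact ⟨x, Relation.EqvGen.refl x, hxy⟩
  | tail _ hbc ih =>
    obtain ⟨y', hxy', hy'b⟩ := ih
    obtain ⟨y'', hy'y'', hy''c⟩ := hR.exists_orbitRel_of_symmGen hy'b hbc
    exact ⟨y'', Relation.EqvGen.trans _ _ _ hxy' hy'y'', hy''c⟩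

end IsCongruence

end

/-- Every congruence `R` on a quandle permutes with the orbit congruence `∼`:
`∼ ∘ R = R ∘ ∼`. -/
theorem congruence_permutes_orbitRel {X : Type*} [Quandle X]
    (R : X → X → Prop) (hR : IsCongruence R) :
    ∀ x z : X, (∃ y, R x y ∧ orbitRel X y z) ↔ (∃ y, orbitRel X x y ∧ R y z) := by
  intro x z
  constructor
  · rintro ⟨y, hxy, hyz⟩
    exact hR.exists_orbitRel_of_rel_orbitRel hxy hyz
  · rintro ⟨y, hxy, hyz⟩
    obtain ⟨y', hzy', hy'x⟩ :=
      hR.exists_orbitRel_of_rel_orbitRel (hR.1.symm hyz) (Relation.EqvGen.symm _ _ hxy)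
    exact ⟨y', hR.1.symm hy'x, Relation.EqvGen.symm _ _ hzy'⟩
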